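/- Let E = {a, b, c} be the three-element semilattice with a·a = a, a·b = b·a = b, b·b = b, and a·c = c·a = b·c = c·b = c·c = c, so that c is zero and a is identity. Define h : E → E by h(a) = b, h(b) = h(c) = c. Then for any non-empty I_λ, the map σ : B⁰_λ(E) → B⁰_λ(E) given by σ(α,a,β) = (α,b,β), σ(α,b,β) = 0, σ(0) = 0 is a non-trivial semigroup homomorphism, but the composition σ∘σ is the trivial (constant) homomorphism. -/

import Mathlib

attribute [local instance] Classical.propDecidable

/-- The Brandt `λ⁰`-extension of a semigroup `S` with zero, with index set `I`:
its elements are `0` (encoded `none`) and triples `(α, s, β)` with `s ≠ 0`. -/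
def Brandt (I S : Type*) [Zero S] : Type _ := Option (I × {s : S // s ≠ 0} × I)

instance brandtZero {I S : Type*} [Zero S] : Zero (Brandt I S) := ⟨none⟩

/-- Multiplication on the Brandt `λ⁰`-extension. -/
noncomputable def brandtMul {I S : Type*} [Zero S] [Mul S] :
    Brandt I S → Brandt I S → Brandt I S
  | some (α, a, β), some (γ, b, δ) =>
      if h : β = γ ∧ a.1 * b.1 ≠ 0 then some (α, ⟨a.1 * b.1, h.2⟩, δ) else none
  | _, _ => none

noncomputable instance brandtMulInst {I S : Type*} [Zero S] [Mul S] :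
    Mul (Brandt I S) := ⟨brandtMul⟩

/-- The semigroup of `I × I`-matrix units. -/
def MatrixUnits (I : Type*) := Option (I × I)

instance muZero {I : Type*} : Zero (MatrixUnits I) := ⟨none⟩

noncomputable instance muMul {I : Type*} : Mul (MatrixUnits I) :=
  ⟨fun x y => match x, y with
    | some (a, b), some (c, d) => if b = c then some (a, d) else none
    | _, _ => none⟩

/-- The subset of `Brandt I S` induced by a subset `T ⊆ S`
(the Brandt extension of `T` inside that of `S`). -/
def brandtSet {I S : Type*} [Zero S] (T : Set S) : Set (Brandt I S) :=
  {z | z = 0 ∨ ∃ (α β : I) (s : {s : S // s ≠ 0}), s.1 ∈ T ∧ z = some (α, s, β)}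

/-- The map `B⁰_{λ₁}(S) → B⁰_{λ₂}(T)` induced by `h : S → T`, an index map `φ`
and families `u`, `v` (`v` playing the role of `a ↦ u(a)⁻¹`):
`(α,s,β) ↦ (φ α, u α · h s · v β, φ β)` when the middle entry is nonzero, else `0`. -/
noncomputable def brandtHomMap {I₁ I₂ S T : Type*} [Zero S] [Zero T] [Mul T]
    (φ : I₁ → I₂) (u v : I₁ → T) (h : S → T) : Brandt I₁ S → Brandt I₂ T
  | some (a, s, b) =>
      if hh : u a * h s.1 * v b ≠ 0 then
        some (φ a, ⟨u a * h s.1 * v b, hh⟩, φ b) else none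
  | none => none

/-- The canonical copy of `S` in `Brandt I S` at index `α` (the set `S_{α,α}`). -/
noncomputable def brandtIncl {I S : Type*} [Zero S] (α : I) : S → Brandt I S :=
  fun s => if h : s = 0 then 0 else some (α, ⟨s, h⟩, α)

/-- The non-zero element `(α, s, β)` of `Brandt I S`. -/
def brandtElt {I S : Type*} [Zero S] (α : I) (s : {s : S // s ≠ 0}) (β : I) :
    Brandt I S := some (α, s, β)

/-- The three-element semilattice `E = {a, b, c}` with identity `a` and zero `c`. -/
inductive Ethree : Type
  | a | b | c
deriving DecidableEq

instance : Zero Ethree := ⟨Ethree.c⟩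

instance : Mul Ethree :=
  ⟨fun x y => match x, y with
    | Ethree.a, Ethree.a => Ethree.a
    | Ethree.a, Ethree.b => Ethree.b
    | Ethree.b, Ethree.a => Ethree.b
    | Ethree.b, Ethree.b => Ethree.b
    | _, _ => Ethree.c⟩

/-- The homomorphism `σ : B⁰_λ(E) → B⁰_λ(E)` induced by `h(a) = b`, `h(b) = h(c) = c`:
`(α,a,β) ↦ (α,b,β)`, `(α,b,β) ↦ 0`, `0 ↦ 0`. -/
noncomputable def sigmaE {I : Type*} : Brandt I Ethree → Brandt I Ethree
  | some (α, s, β) =>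
      if s.1 = Ethree.a then some (α, ⟨Ethree.b, by decide⟩, β) else none
  | none => none

theorem brandtMul_some {I S : Type*} [Zero S] [Mul S] (α β γ δ : I) (a b : {s : S // s ≠ 0}) :
    brandtMul (some (α, a, β) : Brandt I S) (some (γ, b, δ)) =
      if h : β = γ ∧ a.1 * b.1 ≠ 0 then some (α, ⟨a.1 * b.1, h.2⟩, δ) else none := rfl

theorem brandtMul_none_left {I S : Type*} [Zero S] [Mul S] (x : Brandt I S) :
    brandtMul (none : Brandt I S) x = none := rfl

theorem brandtMul_none_right {I S : Type*} [Zero S] [Mul S] (x : Brandt I S) :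
    brandtMul x (none : Brandt I S) = none := by
  rcases (x : Option (I × {s : S // s ≠ 0} × I)) with _ | ⟨α, s, β⟩ <;> rfl

/-- `E` is a semilattice with zero `c` and identity `a`, `σ` is a
non-trivial homomorphism of `B⁰_λ(E)`, yet `σ ∘ σ` is the trivial (constant)
homomorphism. -/
theorem brandt_composition_trivial {I : Type*} [Nonempty I] :
    (∀ x y : Ethree, x * y = y * x) ∧
    (∀ x : Ethree, x * x = x) ∧
    (∀ x : Ethree, Ethree.a * x = x) ∧
    (∀ x : Ethree, (0 : Ethree) * x = 0 ∧ x * 0 = 0) ∧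
    (∀ x y z : Ethree, x * y * z = x * (y * z)) ∧
    (∀ x y : Brandt I Ethree, sigmaE (x * y) = sigmaE x * sigmaE y) ∧
    (∃ x y : Brandt I Ethree, sigmaE x ≠ sigmaE y) ∧
    (∀ x y : Brandt I Ethree, sigmaE (sigmaE x) = sigmaE (sigmaE y)) := by
  have hcases : ∀ z : Brandt I Ethree,
      z = none ∨ ∃ (α β : I) (s : {s : Ethree // s ≠ 0}), z = some (α, s, β) := by
    intro z
    rcases (z : Option (I × {s : Ethree // s ≠ 0} × I)) with _ | ⟨α, s, β⟩
    · exact Or.inl rfl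
    · exact Or.inr ⟨α, β, s, rfl⟩
  have hσσ : ∀ z : Brandt I Ethree, sigmaE (sigmaE z) = none := by
    intro z
    rcases hcases z with rfl | ⟨α, β, s, rfl⟩
    · rfl
    · by_cases h : s.1 = Ethree.a
      · simp [sigmaE, h]
        rfl
      · simp [sigmaE, h]
        rfl
  refine ⟨fun x y => by cases x <;> cases y <;> rfl, fun x => by cases x <;> rfl,
    fun x => by cases x <;> rfl, fun x => by cases x <;> exact ⟨rfl, rfl⟩,
    fun x y z => by cases x <;> cases y <;> cases z <;> rfl, ?_, ?_, ?_⟩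
  · intro x y
    rcases hcases x with rfl | ⟨α, β, s, rfl⟩
    · show sigmaE (brandtMul _ _) = brandtMul (sigmaE _) (sigmaE _)
      rcases hcases (sigmaE y) with h | ⟨γ, δ, t, h⟩ <;> rw [h] <;> rfl
    · rcases hcases y with rfl | ⟨γ, δ, t, rfl⟩
      · show sigmaE (brandtMul _ _) = brandtMul (sigmaE _) (sigmaE _)
        rcases hcases (sigmaE (some (α, s, β))) with h | ⟨γ, δ, t, h⟩ <;>
          rw [h] <;> rfl
      · obtain ⟨s, hs⟩ := s
        obtain ⟨t, ht⟩ := t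
        show sigmaE (brandtMul _ _) = brandtMul (sigmaE _) (sigmaE _)
        by_cases hβγ : β = γ
        · subst hβγ
          cases s <;> cases t <;>
            simp_all [brandtMul_some, brandtMul_none_left, brandtMul_none_right, sigmaE] <;> try rfl
        · cases s <;> cases t <;>
            simp_all [brandtMul_some, brandtMul_none_left, brandtMul_none_right, sigmaE] <;> rfl
  · obtain ⟨i⟩ := (inferInstance : Nonempty I)
    refine ⟨some (i, ⟨Ethree.a, fun h => Ethree.noConfusion h⟩, i), none, ?_⟩
    intro h
    exact Option.some_ne_none _ (show some _ = none from h)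
  · intro x y; rw [hσσ, hσσ]
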